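/- arXiv:1902.02131 — 2 statements merged into one kernel-verified Lean document; each statement's English description precedes it below -/
import Mathlib

section
/- Let l ≥ 1, let h divide l, and suppose {1,...,l-1} ⊆ S ⊆ ℕ₊ \ { k·l : k ∈ ℕ₊ }. Then the Grundy sequence of Subtraction(S) is the h-stair of the sequence a(x) = ⌊(x·h mod l)/h⌋, i.e. G_S(x) = ⌊(x mod l)/h⌋·h + ((x mod l) mod h) for all x. -/
open Finset

/-- mex of a set of naturals. -/
noncomputable def mex (T : Set ℕ) : ℕ := sInf Tᶜ

/-- Grundy value of the subtraction game Subtraction(S) on a heap of size x. -/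
noncomputable def subG (S : Set ℕ) (x : ℕ) : ℕ :=
  mex {g | ∃ s, ∃ _ : s ∈ S ∧ 0 < s ∧ s ≤ x, g = subG S (x - s)}
termination_by x
decreasing_by rename_i hs; obtain ⟨_, h1, h2⟩ := hs; omega

/-- Moves of the generalized cyclic Nimhoff GCN(h; S_1, ..., S_n). -/
def gcnMove {n : ℕ} (h : ℕ) (S : Fin n → Set ℕ) (x y : Fin n → ℕ) : Prop :=
  (∃ i, ∃ s, s ∈ S i ∧ 0 < s ∧ s ≤ x i ∧ y = Function.update x i (x i - s)) ∨
  (∃ s : Fin n → ℕ, (∀ i, s i ≤ x i) ∧ 0 < ∑ i, s i ∧ ∑ i, s i < h ∧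
    y = fun i => x i - s i)

theorem gcnMove_sum_lt {n h : ℕ} {S : Fin n → Set ℕ} {x y : Fin n → ℕ}
    (m : gcnMove h S x y) : ∑ i, y i < ∑ i, x i := by
  rcases m with ⟨i, s, _, hs0, hsx, rfl⟩ | ⟨s, hle, hpos, _, rfl⟩
  · refine Finset.sum_lt_sum (fun j _ => ?_) ⟨i, Finset.mem_univ i, ?_⟩
    · by_cases hj : j = i
      · subst hj; simp [Function.update]
      · simp [Function.update, hj]
    · simp [Function.update]; omega
  · obtain ⟨i, _, hi⟩ := Finset.exists_ne_zero_of_sum_ne_zero (by omega :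
      ∑ i, s i ≠ 0)
    refine Finset.sum_lt_sum (fun j _ => by omega) ⟨i, Finset.mem_univ i, ?_⟩
    have := hle i; omega

/-- Grundy value of a position of the generalized cyclic Nimhoff. -/
noncomputable def gcnGrundy (n h : ℕ) (S : Fin n → Set ℕ) (x : Fin n → ℕ) : ℕ :=
  mex {g | ∃ y, ∃ _ : gcnMove h S x y, g = gcnGrundy n h S y}
termination_by ∑ i, x i
decreasing_by exact gcnMove_sum_lt ‹_›

/-!
Since `S` contains every move `1, …, l - 1`, from `x` one reaches every residue below `x % l`;
since it contains no multiple of `l`, no move preserves the residue. By induction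
`G_S(x) = x % l`, and the `h`-stair formula is just `x % l` split by division with remainder by `h`.
-/

theorem mex_eq_of_notMem_of_forall_lt_mem {T : Set ℕ} {n : ℕ} (hn : n ∉ T)
    (hlt : ∀ v < n, v ∈ T) : mex T = n :=
  le_antisymm (Nat.sInf_le hn)
    (le_of_not_gt fun h => Nat.sInf_mem (s := Tᶜ) ⟨n, hn⟩ (hlt _ h))

theorem Nat.sub_mod_ne_mod_of_not_dvd {l x s : ℕ} (hsx : s ≤ x) (hs : ¬l ∣ s) :
    (x - s) % l ≠ x % l := by
  intro heq
  have := (Nat.modEq_iff_dvd' (Nat.sub_le x s)).mp heq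
  exact hs (by rwa [Nat.sub_sub_self hsx] at this)

theorem Nat.sub_sub_mod_eq {l x v : ℕ} (hl : 0 < l) (hv : v < x % l) :
    (x - (x % l - v)) % l = v := by
  have hx : x - (x % l - v) = l * (x / l) + v := by
    have := Nat.div_add_mod x l
    omega
  rw [hx, Nat.mul_add_mod, Nat.mod_eq_of_lt (hv.trans (Nat.mod_lt x hl))]

theorem subG_eq_mod {S : Set ℕ} {l : ℕ} (hl : 0 < l) (hsub : ∀ s, 0 < s → s < l → s ∈ S)
    (hndvd : ∀ s ∈ S, ¬l ∣ s) (x : ℕ) : subG S x = x % l := by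
  induction x using Nat.strong_induction_on with
  | _ x ih =>
    rw [subG]
    apply mex_eq_of_notMem_of_forall_lt_mem
    · rintro ⟨s, ⟨hsS, hs0, hsx⟩, hg⟩
      rw [ih (x - s) (by omega)] at hg
      exact Nat.sub_mod_ne_mod_of_not_dvd hsx (hndvd s hsS) hg.symm
    · intro v hv
      have hxl : x % l < l := Nat.mod_lt x hl
      have hxle : x % l ≤ x := Nat.mod_le x l
      refine ⟨x % l - v, ⟨hsub _ (by omega) (by omega), by omega, by omega⟩, ?_⟩
      rw [ih _ (by omega), Nat.sub_sub_mod_eq hl hv]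

theorem subG_mod_stair_general (l h : ℕ) (hl : 1 ≤ l)
    (S : Set ℕ)
    (hsub : ∀ s : ℕ, 0 < s → s < l → s ∈ S)
    (hsup : ∀ s ∈ S, 0 < s ∧ ¬∃ k : ℕ, 0 < k ∧ s = k * l)
    (x : ℕ) : subG S x = (x % l) / h * h + (x % l) % h := by
  have hndvd : ∀ s ∈ S, ¬l ∣ s := by
    rintro s hs ⟨k, rfl⟩
    obtain ⟨hpos, hnot⟩ := hsup _ hs
    exact hnot ⟨k, Nat.pos_of_mul_pos_left hpos, Nat.mul_comm l k⟩
  rw [subG_eq_mod hl hsub hndvd, Nat.div_add_mod']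

/-- with moreover `h ∣ l`, the Grundy sequence of `Subtraction(S)`
is the `h`-stair of `a(x) = ⌊(x·h mod l)/h⌋`. -/
theorem subG_mod_stair (l h : ℕ) (hl : 1 ≤ l) (hh : 0 < h) (hdvd : h ∣ l)
    (S : Set ℕ)
    (hsub : ∀ s : ℕ, 0 < s → s < l → s ∈ S)
    (hsup : ∀ s ∈ S, 0 < s ∧ ¬∃ k : ℕ, 0 < k ∧ s = k * l)
    (x : ℕ) : subG S x = (x % l) / h * h + (x % l) % h :=
  subG_mod_stair_general l h hl S hsub hsup x
end

section
/- Fix positive integers h and k, and let S = ℕ₊ \ {h, 2h, ..., kh}. Then the Grundy sequence of Subtraction(S) is the h-stair of the sequence a(x) = ⌊x/(k+1)⌋; explicitly, G_S(qh + r) = ⌊q/(k+1)⌋·h + r for all q ≥ 0 and 0 ≤ r < h. -/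
open Finset

/-!
For any `S`, allowing every non-multiple of `h` and the multiples `s * h` with `s ∈ S` as moves
yields the `h`-stair of the Grundy sequence `G_S`. From `q * h + r` the non-multiples reach every
smaller `q' * h + u` with `u ≠ r`, while the moves `s * h` keep the residue `r` and change the
level `q` exactly as in Subtraction(`S`); so the mex at `q * h + r` is `G_S(q) * h + r`.
The set `ℕ₊ \ {h, …, kh}` is of this form with `S = {s | k < s}`, and the Grundy sequence of
that game is `⌊x / (k + 1)⌋` since from `x` one reaches exactly the heaps `≤ x - (k + 1)`.
-/

lemma mex_notMem {T : Set ℕ} (hT : T.Finite) : mex T ∉ T :=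
  Nat.sInf_mem hT.infinite_compl.nonempty

lemma mem_of_lt_mex {T : Set ℕ} {g : ℕ} (hg : g < mex T) : g ∈ T :=
  not_not.1 (Nat.notMem_of_lt_sInf hg)

lemma mex_eq_of_notMem {T : Set ℕ} {v : ℕ} (hv : v ∉ T) (hlt : ∀ g < v, g ∈ T) :
    mex T = v :=
  le_antisymm (Nat.sInf_le hv) (not_lt.1 fun h => Nat.sInf_mem (s := Tᶜ) ⟨v, hv⟩ (hlt _ h))

section SubtractionGame

variable {S : Set ℕ}

lemma subG_sub_ne {x s : ℕ} (hs : s ∈ S) (hs0 : 0 < s) (hsx : s ≤ x) :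
    subG S (x - s) ≠ subG S x := by
  have hfin : {g | ∃ s, ∃ _ : s ∈ S ∧ 0 < s ∧ s ≤ x, g = subG S (x - s)}.Finite :=
    ((Set.finite_Iic x).image fun s => subG S (x - s)).subset
      (by rintro _ ⟨s, ⟨-, -, hsx⟩, rfl⟩; exact ⟨s, hsx, rfl⟩)
  intro heq
  rw [subG.eq_1 S x] at heq
  exact mex_notMem hfin ⟨s, ⟨hs, hs0, hsx⟩, heq.symm⟩

lemma exists_subG_sub_eq_of_lt {x g : ℕ} (hg : g < subG S x) :
    ∃ s ∈ S, 0 < s ∧ s ≤ x ∧ subG S (x - s) = g := by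
  rw [subG.eq_1 S x] at hg
  obtain ⟨s, ⟨hs, hs0, hsx⟩, rfl⟩ := mem_of_lt_mex hg
  exact ⟨s, hs, hs0, hsx, rfl⟩

lemma subG_eq_of_ne_of_exists {f : ℕ → ℕ}
    (hne : ∀ x s, s ∈ S → 0 < s → s ≤ x → f (x - s) ≠ f x)
    (hreach : ∀ x g, g < f x → ∃ s ∈ S, 0 < s ∧ s ≤ x ∧ f (x - s) = g) :
    subG S = f := by
  funext x
  induction x using Nat.strong_induction_on with
  | _ x ih =>
  rw [subG.eq_1 S x]
  apply mex_eq_of_notMem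
  · rintro ⟨s, ⟨hs, hs0, hsx⟩, heq⟩
    exact hne x s hs hs0 hsx (by rw [heq, ih _ (by omega)])
  · intro g hg
    obtain ⟨s, hs, hs0, hsx, rfl⟩ := hreach x g hg
    exact ⟨s, ⟨hs, hs0, hsx⟩, (ih _ (by omega)).symm⟩

end SubtractionGame

lemma subG_lt_eq_div (k : ℕ) : subG {s | k < s} = fun x => x / (k + 1) := by
  apply subG_eq_of_ne_of_exists
  · intro x s (hs : k < s) _ hsx
    have hq := Nat.div_mul_le_self (x - s) (k + 1)
    have : (x - s) / (k + 1) + 1 ≤ x / (k + 1) := by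
      rw [Nat.le_div_iff_mul_le k.add_one_pos, add_one_mul]
      omega
    omega
  · intro x g hg
    have hgx : (g + 1) * (k + 1) ≤ x := (Nat.le_div_iff_mul_le k.add_one_pos).1 hg
    rw [add_one_mul] at hgx
    refine ⟨x - g * (k + 1), ?_, by omega, Nat.sub_le _ _, ?_⟩
    · show k < x - g * (k + 1)
      omega
    · show (x - (x - g * (k + 1))) / (k + 1) = g
      rw [Nat.sub_sub_self (by omega), Nat.mul_div_cancel _ k.add_one_pos]

def stair (h : ℕ) (a : ℕ → ℕ) (x : ℕ) : ℕ := a (x / h) * h + x % h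

def stairSet (h : ℕ) (S : Set ℕ) : Set ℕ := {t | ¬h ∣ t ∨ ∃ s ∈ S, t = s * h}

section Stair

variable {h : ℕ}

lemma mul_add_div_and_mod {q r : ℕ} (hr : r < h) : (q * h + r) / h = q ∧ (q * h + r) % h = r :=
  (Nat.div_mod_unique (by omega)).2 ⟨by ring, hr⟩

lemma exists_mul_add_eq (hh : 0 < h) (x : ℕ) : ∃ q r, r < h ∧ q * h + r = x :=
  ⟨x / h, x % h, Nat.mod_lt x hh, Nat.div_add_mod' x h⟩

lemma mul_add_inj {a b r r' : ℕ} (hr : r < h) (hr' : r' < h) (e : a * h + r = b * h + r') :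
    a = b ∧ r = r' := by
  obtain ⟨ha, hra⟩ := mul_add_div_and_mod (q := a) hr
  obtain ⟨hb, hrb⟩ := mul_add_div_and_mod (q := b) hr'
  rw [e] at ha hra
  exact ⟨ha ▸ hb, hra ▸ hrb⟩

lemma mul_add_lt_mul_add {a b r r' : ℕ} (hr' : r' < h) (e : a * h + r < b * h + r') :
    a < b ∨ a = b ∧ r < r' := by
  rcases lt_trichotomy a b with hab | rfl | hba
  · exact .inl hab
  · exact .inr ⟨rfl, by omega⟩
  · have : (b + 1) * h ≤ a * h := Nat.mul_le_mul_right h hba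
    rw [add_one_mul] at this
    omega

lemma stair_mul_add (a : ℕ → ℕ) {q r : ℕ} (hr : r < h) : stair h a (q * h + r) = a q * h + r := by
  obtain ⟨hq, hr⟩ := mul_add_div_and_mod (q := q) hr
  rw [stair, hq, hr]

variable {S : Set ℕ}

lemma sub_mem_stairSet_of_ne {q q' r r' : ℕ} (hr : r < h) (hr' : r' < h)
    (hrr : r' ≠ r) (hlt : q' * h + r' < q * h + r) :
    q * h + r - (q' * h + r') ∈ stairSet h S := by
  refine .inl fun hdvd => hrr ?_
  have hmod := (Nat.modEq_iff_dvd' hlt.le).2 hdvd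
  rwa [Nat.ModEq, (mul_add_div_and_mod hr').2, (mul_add_div_and_mod hr).2] at hmod

lemma stair_subG_sub_ne (hh : 0 < h) {x t : ℕ} (ht : t ∈ stairSet h S) (ht0 : 0 < t)
    (htx : t ≤ x) : stair h (subG S) (x - t) ≠ stair h (subG S) x := by
  intro heq
  obtain ⟨q, r, hr, rfl⟩ := exists_mul_add_eq hh x
  obtain ⟨q', r', hr', hy⟩ := exists_mul_add_eq hh (q * h + r - t)
  rw [← hy, stair_mul_add _ hr', stair_mul_add _ hr] at heq
  obtain ⟨hG, rfl⟩ := mul_add_inj hr' hr heq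
  have hq : q' < q := Nat.lt_of_mul_lt_mul_right (a := h) (by omega)
  have ht' : t = (q - q') * h := by
    rw [Nat.sub_mul, Nat.sub_eq_of_eq_add]
    have : q' * h ≤ q * h := Nat.mul_le_mul_right h hq.le
    omega
  rcases ht with hndvd | ⟨s, hs, rfl⟩
  · exact hndvd (ht' ▸ dvd_mul_left h _)
  · obtain rfl : s = q - q' := Nat.eq_of_mul_eq_mul_right hh ht'
    refine subG_sub_ne hs (by omega) (Nat.sub_le q q') ?_
    rwa [Nat.sub_sub_self hq.le]

lemma exists_stair_subG_sub_eq_of_lt (hh : 0 < h) {x g : ℕ} (hg : g < stair h (subG S) x) :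
    ∃ t ∈ stairSet h S, 0 < t ∧ t ≤ x ∧ stair h (subG S) (x - t) = g := by
  obtain ⟨q, r, hr, rfl⟩ := exists_mul_add_eq hh x
  obtain ⟨P, u, hu, rfl⟩ := exists_mul_add_eq hh g
  rw [stair_mul_add _ hr] at hg
  have reach_of_ne : ∀ q', u ≠ r → q' * h + u < q * h + r → subG S q' = P →
      ∃ t ∈ stairSet h S, 0 < t ∧ t ≤ q * h + r ∧
        stair h (subG S) (q * h + r - t) = P * h + u := by
    intro q' hur hlt hP
    refine ⟨_, sub_mem_stairSet_of_ne hr hu hur hlt, by omega, Nat.sub_le _ _, ?_⟩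
    rw [Nat.sub_sub_self hlt.le, stair_mul_add _ hu, hP]
  rcases mul_add_lt_mul_add hr hg with hP | ⟨rfl, hur⟩
  · obtain ⟨s, hs, hs0, hsq, hP⟩ := exists_subG_sub_eq_of_lt hP
    have hsh : s * h ≤ q * h := Nat.mul_le_mul_right h hsq
    have hqs : (q - s) * h + s * h = q * h := by rw [← add_mul, Nat.sub_add_cancel hsq]
    by_cases hur : u = r
    · subst hur
      refine ⟨s * h, .inr ⟨s, hs, rfl⟩, Nat.mul_pos hs0 hh, by omega, ?_⟩
      rw [show q * h + u - s * h = (q - s) * h + u by omega, stair_mul_add _ hu, hP]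
    · refine reach_of_ne (q - s) hur ?_ hP
      have : h ≤ s * h := Nat.le_mul_of_pos_left h hs0
      omega
  · exact reach_of_ne q hur.ne (by omega) rfl

theorem subG_stairSet (hh : 0 < h) : subG (stairSet h S) = stair h (subG S) :=
  subG_eq_of_ne_of_exists (fun _ _ ht ht0 htx => stair_subG_sub_ne hh ht ht0 htx)
    (fun _ _ hg => exists_stair_subG_sub_eq_of_lt hh hg)

end Stair

lemma allBut_multiples_eq_stairSet {h : ℕ} (hh : 0 < h) (k : ℕ) :
    {s : ℕ | 0 < s ∧ ¬∃ m : ℕ, 1 ≤ m ∧ m ≤ k ∧ s = m * h} = stairSet h {m | k < m} := by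
  ext t
  constructor
  · rintro ⟨ht, hnot⟩
    by_cases hdvd : h ∣ t
    · obtain ⟨m, rfl⟩ := hdvd
      have hm : 0 < m := Nat.pos_of_mul_pos_left ht
      exact .inr ⟨m, not_le.1 fun hmk => hnot ⟨m, hm, hmk, mul_comm h m⟩, mul_comm h m⟩
    · exact .inl hdvd
  · rintro (hndvd | ⟨m, hkm : k < m, rfl⟩)
    · refine ⟨Nat.pos_of_ne_zero fun ht => hndvd (ht ▸ dvd_zero h), ?_⟩
      rintro ⟨m, -, -, rfl⟩
      exact hndvd (dvd_mul_left h m)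
    · refine ⟨Nat.mul_pos (by omega) hh, ?_⟩
      rintro ⟨m', -, hm'k, he⟩
      have := Nat.eq_of_mul_eq_mul_right hh he
      omega

theorem allbut_multiples_grundy_general (h k : ℕ)
    (q r : ℕ) (hr : r < h) :
    subG {s : ℕ | 0 < s ∧ ¬∃ m : ℕ, 1 ≤ m ∧ m ≤ k ∧ s = m * h} (q * h + r) =
      q / (k + 1) * h + r := by
  have hh : 0 < h := by omega
  rw [allBut_multiples_eq_stairSet hh, subG_stairSet hh, stair_mul_add _ hr, subG_lt_eq_div]

/-- the Grundy sequence of All-but({h, 2h, ..., kh}) is the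
`h`-stair of `a(x) = ⌊x/(k+1)⌋`. -/
theorem allbut_multiples_grundy (h k : ℕ) (hh : 0 < h) (hk : 0 < k)
    (q r : ℕ) (hr : r < h) :
    subG {s : ℕ | 0 < s ∧ ¬∃ m : ℕ, 1 ≤ m ∧ m ≤ k ∧ s = m * h} (q * h + r) =
      q / (k + 1) * h + r :=
  allbut_multiples_grundy_general h k q r hr
end
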